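/- arXiv:2601.06070 — 2 statements merged into one kernel-verified Lean document; each statement's English description precedes it below -/
import Mathlib

section
/- Let q ∈ ℂ with 0 < |q| < 1, let a ∈ ℂ, let M, N ≥ 1, let B₁,…,B_N be M×M complex matrices, let t₁,…,t_N ∈ ℂ∖{0}, and let τ, x ∈ ℂ∖{0} with q^{m}·τ/x ≠ 1 for every integer m ≥ 0 and with τqⁿ ∉ {t₁,…,t_N} ∪ {t₁/q,…,t_N/q} for all n ≥ 0. Let y : ℂ → ℂ^M satisfy y(z) − y(qz) = (1−q)·z·Σ_i (z − t_i)⁻¹ B_i y(z) at every z = τqⁿ (n ≥ 0). Let Y₀(z) ∈ ℂ^{MN} be the block vector with i-th block y(z)/(z − t_i) (at z = 0 its i-th block is −y(0)/t_i), and assume Y₀(τqⁿ) → Y₀(0) as n → ∞, that the Jackson integrals Φ(x) = ∫₀^τ Y₀(t)·F(t/x) d_q t and Φ(qx) = ∫₀^τ Y₀(t)·F(t/(qx)) d_q t converge (componentwise summable, as do the analogous series for D_q Y₀), and that the boundary term vanishes: F(τ/(qx))·(τ·I_{MN} − S)·Y₀(τ) equals the block vector all of whose N blocks are y(0). Then (x·I_{MN}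 − S)·(a·Φ(x) − Φ(qx))/((1−q)x) = (B + ((a−1)/(1−q))·I_{MN})·Φ(x), where S is block-diagonal with i-th block t_i·I_M and B is the block matrix whose (i,j)-block is B_j for every i. (This is the q-Okubo equation (xI − S)·D_x Y = (q^λ B + [λ]I)·Y satisfied by Y = x^λ Φ, with a = q^{−λ} and [λ] = (1−q^λ)/(1−q), written with the prefactor x^λ removed.) -/
/-- The `q`-analogue of the Euler kernel:
`F(u) = ∏_{k=0}^∞ (1 − a q^{k+1} u)/(1 − q^{k+1} u)`. -/
noncomputable def kernelF (q a u : ℂ) : ℂ :=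
  ∏' k : ℕ, (1 - a * q ^ (k + 1) * u) / (1 - q ^ (k + 1) * u)

/-!
Write `z n = τ qⁿ`, `K n = F(z n / x)` and `L n = F(z n / (q x))`, so that `Φ(x)` and `Φ(q x)` are
`(1 − q) ∑ Y₀(z n) K n z n` and `(1 − q) ∑ Y₀(z n) L n z n`. The functional equation of the kernel
gives `L (n + 1) = K n` and `L n = ((1 − a z n / x) / (1 − z n / x)) K n`. With these, in the
`(i, m)` component of
`(x − tᵢ)/x · (a Φ(x) − Φ(q x))/(1 − q) − (a − 1)/(1 − q) · Φ(x) − ∑ (y(z n) − y(q z n))ₘ K n`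
the `n`-th terms combine to `y(z (n + 1))ₘ L (n + 1) − y(z n)ₘ L n`. This series telescopes to
`y(0)ₘ − y(τ)ₘ F(τ / (q x))`, which vanishes by the boundary condition, because `L n → 1` (tails
of a convergent product) and `y(z n) → y(0)`. Finally, the `q`-difference system turns
`∑ (y(z n) − y(q z n))ₘ K n` into the `(i, m)` component of `B Φ(x)`.
-/

open Filter Topology Matrix

section TailProducts

variable {R : Type*} [NormedCommRing R] [NormOneClass R] [CompleteSpace R]

theorem norm_tprod_one_add_sub_one_le {ι : Type*} {f : ι → R} (hf : Summable fun i ↦ ‖f i‖) :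
    ‖∏' i, (1 + f i) - 1‖ ≤ Real.exp (∑' i, ‖f i‖) - 1 := by
  refine le_of_tendsto' (((multipliable_one_add_of_summable hf).hasProd.sub_const 1).norm)
    fun s ↦ (s.norm_prod_one_add_sub_one_le f).trans ?_
  gcongr
  exact hf.sum_le_tsum s fun i _ ↦ norm_nonneg (f i)

theorem tendsto_tprod_nat_add_one_add {f : ℕ → R} (hf : Summable fun i ↦ ‖f i‖) :
    Tendsto (fun n ↦ ∏' k, (1 + f (k + n))) atTop (𝓝 1) := by
  have hexp : Tendsto (fun n ↦ Real.exp (∑' k, ‖f (k + n)‖) - 1) atTop (𝓝 0) := by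
    simpa using ((Real.continuous_exp.tendsto 0).comp
      (tendsto_sum_nat_add fun i ↦ ‖f i‖)).sub_const 1
  refine tendsto_iff_norm_sub_tendsto_zero.2 (squeeze_zero (fun _ ↦ norm_nonneg _)
    (fun n ↦ norm_tprod_one_add_sub_one_le ?_) hexp)
  exact (summable_nat_add_iff n).2 hf

end TailProducts

section Kernel

variable {q a : ℂ}

noncomputable def kernelFactor (a v : ℂ) : ℂ := (1 - a * v) / (1 - v)

theorem norm_kernelFactor_sub_one_le {v : ℂ} (hv : ‖v‖ ≤ 1 / 2) :
    ‖kernelFactor a v - 1‖ ≤ 2 * ‖1 - a‖ * ‖v‖ := by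
  have hden : 1 / 2 ≤ ‖1 - v‖ := by
    have := norm_sub_norm_le (1 : ℂ) v
    rw [norm_one] at this
    linarith
  have hv1 : 1 - v ≠ 0 := norm_pos_iff.1 (by linarith)
  calc ‖kernelFactor a v - 1‖ = ‖1 - a‖ * ‖v‖ / ‖1 - v‖ := by
        rw [kernelFactor, div_sub_one hv1, ← norm_mul, ← norm_div]
        ring_nf
    _ ≤ ‖1 - a‖ * ‖v‖ / (1 / 2) := by gcongr
    _ = 2 * ‖1 - a‖ * ‖v‖ := by ring

theorem summable_norm_kernelFactor_sub_one (hq : ‖q‖ < 1) (w : ℂ) :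
    Summable fun j : ℕ ↦ ‖kernelFactor a (q ^ j * w) - 1‖ := by
  have hsmall : Tendsto (fun j : ℕ ↦ ‖q ^ j * w‖) atTop (𝓝 0) := by
    simpa using ((tendsto_pow_atTop_nhds_zero_of_norm_lt_one hq).mul_const w).norm
  refine .of_norm_bounded_eventually_nat (g := fun j ↦ 2 * ‖1 - a‖ * ‖w‖ * ‖q‖ ^ j)
    ((summable_geometric_of_lt_one (norm_nonneg q) hq).mul_left _) ?_
  filter_upwards [hsmall.eventually_le_const (by norm_num : (0 : ℝ) < 1 / 2)] with j hj
  rw [norm_norm]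
  refine (norm_kernelFactor_sub_one_le hj).trans_eq ?_
  rw [norm_mul, norm_pow]
  ring

theorem multipliable_kernelFactor (hq : ‖q‖ < 1) (w : ℂ) :
    Multipliable fun j : ℕ ↦ kernelFactor a (q ^ j * w) := by
  simpa using multipliable_one_add_of_summable (summable_norm_kernelFactor_sub_one (a := a) hq w)

theorem kernelF_eq_tprod (q a u : ℂ) :
    kernelF q a u = ∏' k : ℕ, kernelFactor a (q ^ (k + 1) * u) := by
  simp only [kernelF, kernelFactor, mul_assoc]

theorem kernelF_div (hq0 : q ≠ 0) (hq : ‖q‖ < 1) (u : ℂ) :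
    kernelF q a (u / q) = kernelFactor a u * kernelF q a u := by
  have hshift : ∀ k : ℕ, q ^ (k + 1) * (u / q) = q ^ k * u := fun k ↦ by
    rw [pow_succ, mul_assoc, mul_div_cancel₀ _ hq0]
  have hmul : Multipliable fun k : ℕ ↦ kernelFactor a (q ^ (k + 1) * u) := by
    simpa only [pow_succ, mul_assoc] using multipliable_kernelFactor (a := a) hq (q * u)
  rw [kernelF_eq_tprod, kernelF_eq_tprod]
  simp only [hshift]
  simpa using tprod_eq_zero_mul' (f := fun k : ℕ ↦ kernelFactor a (q ^ k * u)) hmul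

theorem tendsto_kernelF_pow_mul (hq : ‖q‖ < 1) (w : ℂ) :
    Tendsto (fun n : ℕ ↦ kernelF q a (q ^ n * w)) atTop (𝓝 1) := by
  have := tendsto_tprod_nat_add_one_add (summable_norm_kernelFactor_sub_one (a := a) hq w)
  simp only [add_sub_cancel] at this
  refine ((tendsto_add_atTop_iff_nat 1).2 this).congr fun n ↦ ?_
  rw [kernelF_eq_tprod]
  congr 1 with k
  ring_nf

end Kernel

theorem HasSum.sub_succ_of_tendsto {G : Type*} [AddCommGroup G] [TopologicalSpace G]
    [IsTopologicalAddGroup G] [T2Space G] {v : ℕ → G} {l : G}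
    (hs : Summable fun n ↦ v (n + 1) - v n) (hv : Tendsto v atTop (𝓝 l)) :
    HasSum (fun n ↦ v (n + 1) - v n) (l - v 0) := by
  convert hs.hasSum
  refine tendsto_nhds_unique ?_ hs.hasSum.tendsto_sum_nat
  simpa only [Finset.sum_range_sub] using hv.sub_const (v 0)

theorem okubo_summand_eq {a x t z y y' K L : ℂ} (hx : x ≠ 0) (hxz : x ≠ z) (hzt : z ≠ t)
    (hL : L = kernelFactor a (z / x) * K) :
    (x - t) / x * (a * (y / (z - t) * K * z) - y / (z - t) * L * z)
        - (a - 1) * (y / (z - t) * K * z) - (y - y') * K = y' * K - y * L := by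
  have hxz' : x - z ≠ 0 := sub_ne_zero.2 hxz
  have hzt' : z - t ≠ 0 := sub_ne_zero.2 hzt
  have hden : 1 - z / x ≠ 0 := by
    rw [one_sub_div hx]
    exact div_ne_zero hxz' hx
  rw [hL, kernelFactor]
  field_simp
  ring

theorem okubo_summation_by_parts {a x t : ℂ} {z y K L : ℕ → ℂ} (hx : x ≠ 0)
    (hxz : ∀ n, x ≠ z n) (hzt : ∀ n, z n ≠ t)
    (hKL : ∀ n, L (n + 1) = K n) (hLK : ∀ n, L n = kernelFactor a (z n / x) * K n)
    (hA : Summable fun n ↦ y n / (z n - t) * K n * z n)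
    (hG : Summable fun n ↦ y n / (z n - t) * L n * z n)
    (hD : Summable fun n ↦ (y n - y (n + 1)) * K n)
    (hlim : Tendsto (fun n ↦ y n * L n) atTop (𝓝 (y 0 * L 0))) :
    (x - t) / x * (a * ∑' n, y n / (z n - t) * K n * z n - ∑' n, y n / (z n - t) * L n * z n)
        - (a - 1) * ∑' n, y n / (z n - t) * K n * z n
      = ∑' n, (y n - y (n + 1)) * K n := by
  have hsum := ((((hA.hasSum.mul_left a).sub hG.hasSum).mul_left ((x - t) / x)).sub
    (hA.hasSum.mul_left (a - 1))).sub hD.hasSum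
  have htelescope : ∀ n, (x - t) / x * (a * (y n / (z n - t) * K n * z n)
        - y n / (z n - t) * L n * z n) - (a - 1) * (y n / (z n - t) * K n * z n)
        - (y n - y (n + 1)) * K n = y (n + 1) * L (n + 1) - y n * L n := fun n ↦ by
    rw [hKL]
    exact okubo_summand_eq hx (hxz n) (hzt n) (hLK n)
  simp only [htelescope] at hsum
  have hzero := HasSum.sub_succ_of_tendsto (v := fun n ↦ y n * L n) hsum.summable hlim
  rw [sub_self] at hzero
  exact sub_eq_zero.1 (hsum.unique hzero)

theorem jackson_okubo_summation_by_parts {q a τ x t l : ℂ} {y : ℕ → ℂ} (hq0 : q ≠ 0)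
    (hq : ‖q‖ < 1) (hx : x ≠ 0) (hxz : ∀ n : ℕ, x ≠ τ * q ^ n) (hzt : ∀ n : ℕ, τ * q ^ n ≠ t)
    (hA : Summable fun n ↦ y n / (τ * q ^ n - t) * kernelF q a (τ * q ^ n / x) * (τ * q ^ n))
    (hG : Summable fun n ↦
      y n / (τ * q ^ n - t) * kernelF q a (τ * q ^ n / (q * x)) * (τ * q ^ n))
    (hD : Summable fun n ↦ (y n - y (n + 1)) * kernelF q a (τ * q ^ n / x))
    (hy : Tendsto y atTop (𝓝 l)) (hbdry : y 0 * kernelF q a (τ / (q * x)) = l) :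
    (x - t) / x * (a * ∑' n, y n / (τ * q ^ n - t) * kernelF q a (τ * q ^ n / x) * (τ * q ^ n)
        - ∑' n, y n / (τ * q ^ n - t) * kernelF q a (τ * q ^ n / (q * x)) * (τ * q ^ n))
        - (a - 1) * ∑' n, y n / (τ * q ^ n - t) * kernelF q a (τ * q ^ n / x) * (τ * q ^ n)
      = ∑' n, (y n - y (n + 1)) * kernelF q a (τ * q ^ n / x) := by
  refine okubo_summation_by_parts hx hxz hzt (fun n ↦ ?_) (fun n ↦ ?_) hA hG hD ?_
  · rw [pow_succ, ← mul_assoc, mul_comm q x, mul_div_mul_right _ _ hq0]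
  · rw [← kernelF_div hq0 hq, div_div, mul_comm x]
  · have hL := (tendsto_kernelF_pow_mul (a := a) hq (τ / (q * x))).congr
      fun n ↦ show kernelF q a (q ^ n * (τ / (q * x))) = kernelF q a (τ * q ^ n / (q * x)) by
        ring_nf
    simpa [hbdry] using hy.mul hL

theorem tendsto_of_tendsto_div_sub {α : Type*} {l : Filter α} {f z : α → ℂ} {c g : ℂ}
    (hc : c ≠ 0) (hzc : ∀ n, z n ≠ c) (hz : Tendsto z l (𝓝 0))
    (h : Tendsto (fun n ↦ f n / (z n - c)) l (𝓝 (g / (0 - c)))) : Tendsto f l (𝓝 g) := by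
  have hmul := h.mul (hz.sub_const c)
  rwa [div_mul_cancel₀ _ (sub_ne_zero.2 (Ne.symm hc)),
    tendsto_congr fun n ↦ div_mul_cancel₀ _ (sub_ne_zero.2 (hzc n))] at hmul

theorem Matrix.smul_one_sub_diagonal_mulVec {ι R : Type*} [Fintype ι] [DecidableEq ι]
    [CommRing R] (c : R) (d v : ι → R) (i : ι) :
    ((c • (1 : Matrix ι ι R) - Matrix.diagonal d) *ᵥ v) i = (c - d i) * v i := by
  simp [Matrix.sub_mulVec, Matrix.smul_mulVec, Matrix.mulVec_diagonal, sub_mul]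

theorem Matrix.sum_smul_mulVec_apply {ι κ R : Type*} [Fintype ι] [Fintype κ] [CommRing R]
    (B : ι → Matrix κ κ R) (c : ι → R) (v : κ → R) (k : κ) :
    (∑ i, c i • B i *ᵥ v) k = ∑ r : ι × κ, B r.1 k r.2 * (c r.1 * v r.2) := by
  simp [Finset.sum_apply, Matrix.mulVec, dotProduct, Fintype.sum_prod_type, Finset.mul_sum,
    mul_left_comm]

theorem hasSum_qDifference_mul {M N : ℕ} {q : ℂ} {t : Fin N → ℂ}
    {B : Fin N → Matrix (Fin M) (Fin M) ℂ} {Y : ℕ → Fin M → ℂ} {z K : ℕ → ℂ}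
    (hsys : ∀ n, Y n - Y (n + 1) = ((1 - q) * z n) • ∑ i, (z n - t i)⁻¹ • B i *ᵥ Y n)
    (hsum : ∀ r : Fin N × Fin M, Summable fun n ↦ Y n r.2 / (z n - t r.1) * K n * z n)
    (m : Fin M) :
    HasSum (fun n ↦ (Y n m - Y (n + 1) m) * K n)
      (∑ r : Fin N × Fin M,
        B r.1 m r.2 * ((1 - q) * ∑' n, Y n r.2 / (z n - t r.1) * K n * z n)) := by
  have hterm : ∀ n, (Y n m - Y (n + 1) m) * K n
      = ∑ r : Fin N × Fin M, B r.1 m r.2 * ((1 - q) * (Y n r.2 / (z n - t r.1) * K n * z n)) := by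
    intro n
    rw [← Pi.sub_apply, hsys n, Pi.smul_apply, Matrix.sum_smul_mulVec_apply, smul_eq_mul,
      Finset.mul_sum, Finset.sum_mul]
    exact Finset.sum_congr rfl fun r _ ↦ by ring
  simp only [hterm]
  exact hasSum_sum fun r _ ↦ ((hsum r).hasSum.mul_left _).mul_left _

theorem euler_okubo_general (q a τ x : ℂ) (hq0 : 0 < ‖q‖) (hq1 : ‖q‖ < 1)
    (hx : x ≠ 0) (hqτx : ∀ m : ℕ, q ^ m * τ / x ≠ 1)
    (M N : ℕ)
    (B : Fin N → Matrix (Fin M) (Fin M) ℂ) (t : Fin N → ℂ) (ht : ∀ i, t i ≠ 0)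
    (hτt : ∀ (n : ℕ) (i : Fin N), τ * q ^ n ≠ t i ∧ τ * q ^ n ≠ t i / q)
    (y : ℂ → Fin M → ℂ)
    (hsys : ∀ n : ℕ, y (τ * q ^ n) - y (q * (τ * q ^ n)) =
      ((1 - q) * (τ * q ^ n)) •
        ∑ i, ((τ * q ^ n) - t i)⁻¹ • (B i).mulVec (y (τ * q ^ n)))
    (Y₀ : ℂ → Fin N × Fin M → ℂ)
    (hY₀ : ∀ z p, Y₀ z p = y z p.2 / (z - t p.1))
    (hY₀lim : Filter.Tendsto (fun n : ℕ => Y₀ (τ * q ^ n)) Filter.atTop (nhds (Y₀ 0)))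
    (hsum1 : ∀ p, Summable (fun n : ℕ =>
      Y₀ (τ * q ^ n) p * kernelF q a (τ * q ^ n / x) * (τ * q ^ n)))
    (hsum2 : ∀ p, Summable (fun n : ℕ =>
      Y₀ (τ * q ^ n) p * kernelF q a (τ * q ^ n / (q * x)) * (τ * q ^ n)))
    (S : Matrix (Fin N × Fin M) (Fin N × Fin M) ℂ)
    (hS : S = Matrix.of fun p r : Fin N × Fin M => if p = r then t p.1 else 0)
    (hbdry : kernelF q a (τ / (q * x)) •
        ((τ • (1 : Matrix (Fin N × Fin M) (Fin N × Fin M) ℂ) - S).mulVec (Y₀ τ))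
      = fun p => y 0 p.2)
    (Φ : ℂ → Fin N × Fin M → ℂ)
    (hΦ : ∀ w p, Φ w p =
      (1 - q) * ∑' n : ℕ, Y₀ (τ * q ^ n) p * kernelF q a (τ * q ^ n / w) * (τ * q ^ n)) :
    (x • (1 : Matrix (Fin N × Fin M) (Fin N × Fin M) ℂ) - S).mulVec
        (fun p => (a * Φ x p - Φ (q * x) p) / ((1 - q) * x)) =
      (Matrix.of (fun p r : Fin N × Fin M => (B r.1) p.2 r.2)
        + ((a - 1) / (1 - q)) •
            (1 : Matrix (Fin N × Fin M) (Fin N × Fin M) ℂ)).mulVec (Φ x) := by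
  have hq : q ≠ 0 := norm_pos_iff.1 hq0
  have h1q : (1 : ℂ) - q ≠ 0 := sub_ne_zero.2 fun h ↦ by simp [← h] at hq1
  have hxz : ∀ n : ℕ, x ≠ τ * q ^ n := fun n h ↦ hqτx n (by rw [mul_comm, ← h, div_self hx])
  obtain rfl : Y₀ = fun z p ↦ y z p.2 / (z - t p.1) := funext fun z ↦ funext (hY₀ z)
  obtain rfl : S = diagonal fun p ↦ t p.1 := hS
  simp only [← pow_succ', mul_left_comm q τ] at hsys
  funext ⟨i, m⟩
  have hylim : Tendsto (fun n ↦ y (τ * q ^ n) m) atTop (𝓝 (y 0 m)) :=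
    tendsto_of_tendsto_div_sub (ht i) (fun n ↦ (hτt n i).1)
      (by simpa using (tendsto_pow_atTop_nhds_zero_of_norm_lt_one hq1).const_mul τ)
      (tendsto_pi_nhds.1 hY₀lim (i, m))
  have hboundary : y τ m * kernelF q a (τ / (q * x)) = y 0 m := by
    have h := congrFun hbdry (i, m)
    rw [Pi.smul_apply, Matrix.smul_one_sub_diagonal_mulVec,
      mul_div_cancel₀ _ (sub_ne_zero.2 (by simpa using (hτt 0 i).1))] at h
    simpa [mul_comm] using h
  have hqdiff := hasSum_qDifference_mul hsys hsum1 m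
  have hparts := jackson_okubo_summation_by_parts (a := a) (y := fun n ↦ y (τ * q ^ n) m) hq
    hq1 hx hxz (fun n ↦ (hτt n i).1) (hsum1 (i, m)) (hsum2 (i, m)) hqdiff.summable hylim
    (by simpa using hboundary)
  rw [hqdiff.tsum_eq] at hparts
  rw [Matrix.smul_one_sub_diagonal_mulVec, Matrix.add_mulVec, Pi.add_apply, Matrix.smul_mulVec,
    Matrix.one_mulVec]
  simp only [hΦ, Matrix.mulVec, dotProduct, of_apply, Pi.smul_apply, smul_eq_mul]
  generalize ∑ r : Fin N × Fin M, B r.1 m r.2 * ((1 - q) *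
    ∑' n, y (τ * q ^ n) r.2 / (τ * q ^ n - t r.1) * kernelF q a (τ * q ^ n / x) * (τ * q ^ n))
    = BΦ at hparts ⊢
  generalize ∑' n, y (τ * q ^ n) m / (τ * q ^ n - t i) * kernelF q a (τ * q ^ n / x) * (τ * q ^ n)
    = A at hparts ⊢
  generalize ∑' n, y (τ * q ^ n) m / (τ * q ^ n - t i) * kernelF q a (τ * q ^ n / (q * x))
    * (τ * q ^ n) = G at hparts ⊢
  field_simp at hparts ⊢
  linear_combination hparts

/-- The `q`-Euler transform of the Okubo block vector `Y₀` satisfies the `q`-Okubo type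
system `(x I − S)·(aΦ(x) − Φ(qx))/((1−q)x) = (B + ((a−1)/(1−q)) I)·Φ(x)`,
provided the boundary term vanishes. -/
theorem euler_okubo (q a τ x : ℂ) (hq0 : 0 < ‖q‖) (hq1 : ‖q‖ < 1)
    (hτ : τ ≠ 0) (hx : x ≠ 0) (hqτx : ∀ m : ℕ, q ^ m * τ / x ≠ 1)
    (M N : ℕ) (hM : 1 ≤ M) (hN : 1 ≤ N)
    (B : Fin N → Matrix (Fin M) (Fin M) ℂ) (t : Fin N → ℂ) (ht : ∀ i, t i ≠ 0)
    (hτt : ∀ (n : ℕ) (i : Fin N), τ * q ^ n ≠ t i ∧ τ * q ^ n ≠ t i / q)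
    (y : ℂ → Fin M → ℂ)
    (hsys : ∀ n : ℕ, y (τ * q ^ n) - y (q * (τ * q ^ n)) =
      ((1 - q) * (τ * q ^ n)) •
        ∑ i, ((τ * q ^ n) - t i)⁻¹ • (B i).mulVec (y (τ * q ^ n)))
    (Y₀ : ℂ → Fin N × Fin M → ℂ)
    (hY₀ : ∀ z p, Y₀ z p = y z p.2 / (z - t p.1))
    (hY₀lim : Filter.Tendsto (fun n : ℕ => Y₀ (τ * q ^ n)) Filter.atTop (nhds (Y₀ 0)))
    (hsum1 : ∀ p, Summable (fun n : ℕ =>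
      Y₀ (τ * q ^ n) p * kernelF q a (τ * q ^ n / x) * (τ * q ^ n)))
    (hsum2 : ∀ p, Summable (fun n : ℕ =>
      Y₀ (τ * q ^ n) p * kernelF q a (τ * q ^ n / (q * x)) * (τ * q ^ n)))
    (hsum3 : ∀ p, Summable (fun n : ℕ =>
      ((Y₀ (τ * q ^ n) p - Y₀ (q * (τ * q ^ n)) p) / ((1 - q) * (τ * q ^ n)))
        * kernelF q a (τ * q ^ n / x) * (τ * q ^ n)))
    (S : Matrix (Fin N × Fin M) (Fin N × Fin M) ℂ)
    (hS : S = Matrix.of fun p r : Fin N × Fin M => if p = r then t p.1 else 0)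
    (hbdry : kernelF q a (τ / (q * x)) •
        ((τ • (1 : Matrix (Fin N × Fin M) (Fin N × Fin M) ℂ) - S).mulVec (Y₀ τ))
      = fun p => y 0 p.2)
    (Φ : ℂ → Fin N × Fin M → ℂ)
    (hΦ : ∀ w p, Φ w p =
      (1 - q) * ∑' n : ℕ, Y₀ (τ * q ^ n) p * kernelF q a (τ * q ^ n / w) * (τ * q ^ n)) :
    (x • (1 : Matrix (Fin N × Fin M) (Fin N × Fin M) ℂ) - S).mulVec
        (fun p => (a * Φ x p - Φ (q * x) p) / ((1 - q) * x)) =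
      (Matrix.of (fun p r : Fin N × Fin M => (B r.1) p.2 r.2)
        + ((a - 1) / (1 - q)) •
            (1 : Matrix (Fin N × Fin M) (Fin N × Fin M) ℂ)).mulVec (Φ x) :=
  euler_okubo_general q a τ x hq0 hq1 hx hqτx M N B t ht hτt y hsys Y₀ hY₀ hY₀lim hsum1 hsum2 S hS
    hbdry Φ hΦ
end

section
/- Let q ∈ ℂ with 0 < |q| < 1, let N ≥ 1, let B₁,…,B_N be M×M complex matrices, let t₁,…,t_N ∈ ℂ, fix an index j with t_j = t ≠ 0 and let t' ∈ ℂ∖{0} with t' ≠ t_i for all i ≠ j. Define g(x) = ∏_{k=0}^∞ (1 − x qᵏ/t')/(1 − x qᵏ/t). Fix x ∈ ℂ with x ≠ 0, x ∉ {t₁,…,t_N} ∪ {t'}, and x·qᵏ ∉ {t, t'} for all integers k ≥ 0. If y : ℂ → ℂ^M satisfies (D_q y)(x) = Σ_{i=1}^N (x − t_i)⁻¹ B_i y(x) at x, then y'(z) = g(z)·y(z) satisfies (D_q y')(x) = [Σ_{i≠j} (x − t_i)⁻¹ B'_i + (x − t')⁻¹ B'_j]·y'(x), where B'_i = (t'/t)·((t_i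 − t)/(t_i − t'))·B_i for i ≠ j, and B'_j = Σ_{i≠j} (t'/t)·((t' − t)/(t' − t_i))·B_i + (t'/t)·B_j + ((t − t')/(t(1−q)))·I_M. (This transformation is the addition: it replaces the singular point t_j = t by t' and the residue matrices B_i by B'_i.) -/
/-!
The factor `g` satisfies `g(qx) = c·g(x)` with `c = (1 - x/t)/(1 - x/t')`, so the
`q`-Leibniz rule gives `D_q(g y)(x) = ((1 - c)/((1 - q)x) + c A(x)) (g y)(x)`, where
`A(x) = ∑ᵢ (x - tᵢ)⁻¹ Bᵢ`. It remains to check, by partial fractions in `x`, that this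
matrix is `∑_{i≠j} (x - tᵢ)⁻¹ B'ᵢ + (x - t')⁻¹ B'ⱼ`.
-/

/-- The gauge factor `g(x) = (x/t')_∞/(x/t)_∞ = ∏_{k=0}^∞ (1 − xqᵏ/t')/(1 − xqᵏ/t)`. -/
noncomputable def qGauge (q t t' x : ℂ) : ℂ :=
  ∏' k : ℕ, (1 - x * q ^ k / t') / (1 - x * q ^ k / t)

open Filter Topology Asymptotics Finset

theorem qGauge_multipliable (q t t' x : ℂ) (hq : ‖q‖ < 1) :
    Multipliable fun k : ℕ => (1 - x * q ^ k / t') / (1 - x * q ^ k / t) := by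
  by_cases! hden : ∃ k, 1 - x * q ^ k / t = 0
  · obtain ⟨k, hk⟩ := hden
    exact multipliable_of_exists_eq_zero ⟨k, by simp [hk]⟩
  have hgeom : Tendsto (fun k : ℕ => q ^ k) atTop (𝓝 0) :=
    tendsto_pow_atTop_nhds_zero_of_norm_lt_one hq
  have hinv : Tendsto (fun k : ℕ => (1 - x * q ^ k / t)⁻¹) atTop (𝓝 1) := by
    simpa using (((hgeom.const_mul x).div_const t).const_sub 1).inv₀ (by simp)
  have hsum : Summable fun k : ℕ => (x / t - x / t') * q ^ k * (1 - x * q ^ k / t)⁻¹ := by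
    refine summable_of_isBigO_nat' (g := fun k : ℕ => (x / t - x / t') * q ^ k)
      ((summable_geometric_of_norm_lt_one hq).mul_left (x / t - x / t')) ?_
    simpa using
      (isBigO_refl (fun k : ℕ => (x / t - x / t') * q ^ k) atTop).mul (hinv.isBigO_one ℂ)
  -- `(1 - a) / (1 - b) = 1 + (b - a) / (1 - b)`, whose second term is `O(qᵏ)`
  convert Complex.multipliable_one_add_of_summable hsum using 2 with k
  field_simp [hden k]
  ring

theorem qGauge_eq_mul_qGauge_q_mul (q t t' x : ℂ) (hq : ‖q‖ < 1) :
    qGauge q t t' x = (1 - x / t') / (1 - x / t) * qGauge q t t' (q * x) := by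
  have hshift (k : ℕ) : x * q ^ (k + 1) = q * x * q ^ k := by ring
  rw [qGauge, tprod_eq_zero_mul'
    (by simpa only [hshift] using qGauge_multipliable q t t' (q * x) hq)]
  simp only [pow_zero, mul_one, hshift, qGauge]

theorem qGauge_q_mul (q t t' x : ℂ) (hq : ‖q‖ < 1) (ht : t ≠ 0) (ht' : t' ≠ 0)
    (hxt : x ≠ t) (hxt' : x ≠ t') :
    qGauge q t t' (q * x) = (1 - x / t) / (1 - x / t') * qGauge q t t' x := by
  have h : 1 - x / t ≠ 0 := by rwa [sub_ne_zero, ne_comm, ne_eq, div_eq_one_iff_eq ht]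
  have h' : 1 - x / t' ≠ 0 := by rwa [sub_ne_zero, ne_comm, ne_eq, div_eq_one_iff_eq ht']
  rw [qGauge_eq_mul_qGauge_q_mul q t t' x hq]
  field_simp

noncomputable def qDeriv {ι : Type*} (q : ℂ) (y : ℂ → ι → ℂ) (x : ℂ) : ι → ℂ :=
  fun m => (y x m - y (q * x) m) / ((1 - q) * x)

theorem qDeriv_smul_of_map_mul_left {ι : Type*} (q c x : ℂ) (g : ℂ → ℂ)
    (y : ℂ → ι → ℂ) (hg : g (q * x) = c * g x) :
    qDeriv q (fun z => g z • y z) x =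
      g x • (((1 - c) / ((1 - q) * x)) • y x + c • qDeriv q y x) := by
  funext m
  simp only [qDeriv, Pi.smul_apply, Pi.add_apply, smul_eq_mul, hg]
  ring

theorem addition_residue_sum_eq {ι A : Type*} [Fintype ι] [DecidableEq ι]
    [Ring A] [Algebra ℂ A]
    (q x t' : ℂ) (t : ι → ℂ) (j : ι) (B B' : ι → A)
    (htj : t j ≠ 0) (ht' : t' ≠ 0) (ht'i : ∀ i, i ≠ j → t' ≠ t i)
    (hx : x ≠ 0) (hxt : ∀ i, x ≠ t i) (hxt' : x ≠ t')
    (hB'ne : ∀ i, i ≠ j → B' i = ((t' / t j) * ((t i - t j) / (t i - t'))) • B i)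
    (hB'j : B' j = (∑ i ∈ univ.erase j, ((t' / t j) * ((t' - t j) / (t' - t i))) • B i)
        + (t' / t j) • B j + ((t j - t') / (t j * (1 - q))) • 1) :
    ∑ i ∈ univ.erase j, (x - t i)⁻¹ • B' i + (x - t')⁻¹ • B' j =
      ((1 - (1 - x / t j) / (1 - x / t')) / ((1 - q) * x)) • (1 : A)
        + ((1 - x / t j) / (1 - x / t')) • ∑ i, (x - t i)⁻¹ • B i := by
  set c := (1 - x / t j) / (1 - x / t') with hc
  have hxtj : x - t j ≠ 0 := sub_ne_zero.mpr (hxt j)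
  have hxt'₀ : x - t' ≠ 0 := sub_ne_zero.mpr hxt'
  have hresidue (i : ι) (hij : i ≠ j) :
      (x - t i)⁻¹ * (t' / t j * ((t i - t j) / (t i - t')))
        + (x - t')⁻¹ * (t' / t j * ((t' - t j) / (t' - t i))) = c * (x - t i)⁻¹ := by
    have hxti : x - t i ≠ 0 := sub_ne_zero.mpr (hxt i)
    have hti : t i - t' ≠ 0 := sub_ne_zero.mpr (ht'i i hij).symm
    have hti' : t' - t i ≠ 0 := sub_ne_zero.mpr (ht'i i hij)
    rw [hc]
    field_simp
    ring
  have hresidue_j : (x - t')⁻¹ * (t' / t j) = c * (x - t j)⁻¹ := by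
    rw [hc]; field_simp; ring
  have hone : (x - t')⁻¹ * ((t j - t') / (t j * (1 - q))) = (1 - c) / ((1 - q) * x) := by
    rw [hc]; field_simp; ring
  have hsum :
      ∑ i ∈ univ.erase j, ((x - t i)⁻¹ * (t' / t j * ((t i - t j) / (t i - t')))) • B i
      + ∑ i ∈ univ.erase j, ((x - t')⁻¹ * (t' / t j * ((t' - t j) / (t' - t i)))) • B i
      = ∑ i ∈ univ.erase j, (c * (x - t i)⁻¹) • B i := by
    rw [← sum_add_distrib]
    exact sum_congr rfl fun i hi => by rw [← add_smul, hresidue i (ne_of_mem_erase hi)]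
  rw [hB'j, sum_congr rfl fun i hi => by rw [hB'ne i (ne_of_mem_erase hi)],
    ← add_sum_erase _ _ (mem_univ j)]
  simp only [smul_add, smul_sum, smul_smul, hresidue_j, hone, ← hsum]
  abel

theorem addition_transform_general (q : ℂ) (hq1 : ‖q‖ < 1)
    (M N : ℕ)
    (B : Fin N → Matrix (Fin M) (Fin M) ℂ) (t : Fin N → ℂ) (j : Fin N)
    (htj : t j ≠ 0) (t' : ℂ) (ht' : t' ≠ 0) (ht'i : ∀ i, i ≠ j → t' ≠ t i)
    (x : ℂ) (hx : x ≠ 0) (hxt : ∀ i, x ≠ t i) (hxt' : x ≠ t')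
    (y : ℂ → Fin M → ℂ)
    (hsys : (fun m => (y x m - y (q * x) m) / ((1 - q) * x)) =
      (∑ i, (x - t i)⁻¹ • B i).mulVec (y x))
    (B' : Fin N → Matrix (Fin M) (Fin M) ℂ)
    (hB'ne : ∀ i, i ≠ j → B' i = ((t' / t j) * ((t i - t j) / (t i - t'))) • B i)
    (hB'j : B' j =
      (∑ i ∈ Finset.univ.erase j, ((t' / t j) * ((t' - t j) / (t' - t i))) • B i)
        + (t' / t j) • B j + ((t j - t') / (t j * (1 - q))) • 1)
    (y' : ℂ → Fin M → ℂ) (hy' : ∀ z, y' z = qGauge q (t j) t' z • y z) :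
    (fun m => (y' x m - y' (q * x) m) / ((1 - q) * x)) =
      ((∑ i ∈ Finset.univ.erase j, (x - t i)⁻¹ • B' i)
        + (x - t')⁻¹ • B' j).mulVec (y' x) := by
  have hg := qGauge_q_mul q (t j) t' x hq1 htj ht' (hxt j) hxt'
  change qDeriv q y' x = _
  rw [funext hy', qDeriv_smul_of_map_mul_left q _ x _ y hg, show qDeriv q y x = _ from hsys,
    addition_residue_sum_eq q x t' t j B B' htj ht' ht'i hx hxt hxt' hB'ne hB'j]
  simp only [Matrix.add_mulVec, Matrix.smul_mulVec, Matrix.one_mulVec, Matrix.mulVec_smul,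
    smul_add, smul_comm (qGauge q (t j) t' x)]

/-- The addition: the gauge transformation `y ↦ g·y` replaces the singular point
`t_j` by `t'` and the residue matrices `Bᵢ` by `B'ᵢ`. -/
theorem addition_transform (q : ℂ) (hq0 : 0 < ‖q‖) (hq1 : ‖q‖ < 1)
    (M N : ℕ) (hM : 1 ≤ M) (hN : 1 ≤ N)
    (B : Fin N → Matrix (Fin M) (Fin M) ℂ) (t : Fin N → ℂ) (j : Fin N)
    (htj : t j ≠ 0) (t' : ℂ) (ht' : t' ≠ 0) (ht'i : ∀ i, i ≠ j → t' ≠ t i)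
    (x : ℂ) (hx : x ≠ 0) (hxt : ∀ i, x ≠ t i) (hxt' : x ≠ t')
    (hk : ∀ k : ℕ, x * q ^ k ≠ t j ∧ x * q ^ k ≠ t')
    (y : ℂ → Fin M → ℂ)
    (hsys : (fun m => (y x m - y (q * x) m) / ((1 - q) * x)) =
      (∑ i, (x - t i)⁻¹ • B i).mulVec (y x))
    (B' : Fin N → Matrix (Fin M) (Fin M) ℂ)
    (hB'ne : ∀ i, i ≠ j → B' i = ((t' / t j) * ((t i - t j) / (t i - t'))) • B i)
    (hB'j : B' j =
      (∑ i ∈ Finset.univ.erase j, ((t' / t j) * ((t' - t j) / (t' - t i))) • B i)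
        + (t' / t j) • B j + ((t j - t') / (t j * (1 - q))) • 1)
    (y' : ℂ → Fin M → ℂ) (hy' : ∀ z, y' z = qGauge q (t j) t' z • y z) :
    (fun m => (y' x m - y' (q * x) m) / ((1 - q) * x)) =
      ((∑ i ∈ Finset.univ.erase j, (x - t i)⁻¹ • B' i)
        + (x - t')⁻¹ • B' j).mulVec (y' x) :=
  addition_transform_general q hq1 M N B t j htj t' ht' ht'i x hx hxt hxt' y hsys B' hB'ne hB'j y'
    hy'
end
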